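/- Let N ≥ 1, m ∈ ℕ, and let p = Σ_{|α| = m} c_α x^α be a complex-coefficient polynomial on ℝ^N homogeneous of degree m. Then for every multi-index γ ∈ ℕ^N, ‖∂^γ p‖_F ≤ m^{|γ|} · ‖p‖_F, where the Fischer norm of a polynomial q = Σ_α d_α x^α is defined by ‖q‖_F² = Σ_α α! · |d_α|² (with α! = α_1!⋯α_N!). -/

import Mathlib

/-!
Differentiation shifts coefficients: if `α = β + γ`, the coefficient of `x^β` in `∂^γ p` is
`(α! / β!) c_α`, hence `β! |d_β|² = (α! / β!) · α! |c_α|²`. The ratio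
`α! / β! = ∏ⱼ αⱼ (αⱼ - 1) ⋯ (βⱼ + 1) ≤ ∏ⱼ αⱼ ^ γⱼ` is at most `m ^ |γ|` as soon as `|α| ≤ m`,
so summing over `β` gives `‖∂^γ p‖_F² ≤ m ^ |γ| ‖p‖_F²`, which is even stronger than the claim.
-/

open MvPolynomial

/-- The multi-index partial derivative `∂^γ` on polynomials. -/
noncomputable def mderiv {N : ℕ} (γ : Fin N → ℕ) :
    Module.End ℂ (MvPolynomial (Fin N) ℂ) :=
  (List.finRange N).foldr
    (fun j D => ((MvPolynomial.pderiv j).toLinearMap) ^ (γ j) * D) 1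

/-- The square of the Fischer norm: for `q = Σ_α d_α x^α`,
`‖q‖_F² = Σ_α α! |d_α|²`. -/
noncomputable def fischerNormSq {N : ℕ} (p : MvPolynomial (Fin N) ℂ) : ℝ :=
  ∑ α ∈ p.support, (∏ j, ((α j).factorial : ℝ)) * ‖MvPolynomial.coeff α p‖ ^ 2

namespace MvPolynomial

variable {R σ : Type*} [CommSemiring R]

theorem coeff_pderiv_pow (i : σ) (k : ℕ) (p : MvPolynomial σ R) (β : σ →₀ ℕ) :
    coeff β (((pderiv i).toLinearMap ^ k : Module.End R (MvPolynomial σ R)) p) =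
      coeff (β + Finsupp.single i k) p * ((β i + k).descFactorial k : ℕ) := by
  induction k generalizing p with
  | zero => simp
  | succ k ih =>
    classical
    rw [pow_succ, Module.End.mul_apply, ih, Derivation.coeFn_coe, coeff_pderiv, add_assoc,
      ← Finsupp.single_add, ← add_assoc (β i), Nat.succ_descFactorial_succ]
    simp only [Finsupp.add_apply, Finsupp.single_eq_same]
    push_cast
    ring

theorem coeff_foldr_pderiv_pow (γ : σ → ℕ) {l : List σ} (hl : l.Nodup)
    (p : MvPolynomial σ R) (β : σ →₀ ℕ) :
    coeff β ((l.foldr (fun j D => (pderiv j).toLinearMap ^ γ j * D)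
        (1 : Module.End R (MvPolynomial σ R))) p) =
      coeff (β + (l.map fun j => Finsupp.single j (γ j)).sum) p *
        ((l.map fun j => (β j + γ j).descFactorial (γ j)).prod : ℕ) := by
  induction l generalizing β with
  | nil => simp
  | cons i l ih =>
    classical
    obtain ⟨hi, hl⟩ := List.nodup_cons.mp hl
    have hshift : l.map (fun j => ((β + Finsupp.single i (γ i)) j + γ j).descFactorial (γ j)) =
        l.map fun j => (β j + γ j).descFactorial (γ j) :=
      List.map_congr_left fun j hj => by
        simp [show i ≠ j by rintro rfl; exact hi hj]
    rw [List.foldr_cons, Module.End.mul_apply, coeff_pderiv_pow, ih hl, hshift]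
    simp only [List.map_cons, List.sum_cons, List.prod_cons, add_assoc]
    push_cast
    ring

end MvPolynomial

theorem coeff_mderiv {N : ℕ} (γ : Fin N → ℕ) (p : MvPolynomial (Fin N) ℂ) (β : Fin N →₀ ℕ) :
    coeff β (mderiv γ p) =
      coeff (β + Finsupp.equivFunOnFinite.symm γ) p *
        (∏ j, (β j + γ j).descFactorial (γ j) : ℕ) := by
  rw [mderiv, coeff_foldr_pderiv_pow γ (List.nodup_finRange N),
    Finsupp.equivFunOnFinite_symm_eq_sum, Fin.sum_univ_def, Fin.prod_univ_def]

theorem Finset.prod_factorial_mul_prod_descFactorial {ι : Type*} (s : Finset ι) (β γ : ι → ℕ) :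
    (∏ j ∈ s, (β j).factorial) * ∏ j ∈ s, (β j + γ j).descFactorial (γ j) =
      ∏ j ∈ s, (β j + γ j).factorial := by
  rw [← Finset.prod_mul_distrib]
  refine Finset.prod_congr rfl fun j _ => ?_
  simpa using Nat.factorial_mul_descFactorial (Nat.le_add_left (γ j) (β j))

theorem Finset.prod_descFactorial_le_pow_sum {ι : Type*} (s : Finset ι) (β γ : ι → ℕ) {m : ℕ}
    (hm : ∑ j ∈ s, (β j + γ j) ≤ m) :
    ∏ j ∈ s, (β j + γ j).descFactorial (γ j) ≤ m ^ ∑ j ∈ s, γ j := by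
  rw [← Finset.prod_pow_eq_pow_sum]
  refine Finset.prod_le_prod' fun j hj => (Nat.descFactorial_le_pow _ _).trans ?_
  exact Nat.pow_le_pow_left ((Finset.single_le_sum (fun _ _ => Nat.zero_le _) hj).trans hm) _

section Fischer

variable {N : ℕ}

noncomputable def fischerTerm (p : MvPolynomial (Fin N) ℂ) (α : Fin N →₀ ℕ) : ℝ :=
  (∏ j, ((α j).factorial : ℝ)) * ‖coeff α p‖ ^ 2

theorem fischerTerm_nonneg (p : MvPolynomial (Fin N) ℂ) (α : Fin N →₀ ℕ) :
    0 ≤ fischerTerm p α := by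
  unfold fischerTerm
  positivity

theorem fischerNormSq_nonneg (p : MvPolynomial (Fin N) ℂ) : 0 ≤ fischerNormSq p :=
  Finset.sum_nonneg fun α _ => fischerTerm_nonneg p α

theorem sum_fischerTerm_le_fischerNormSq (p : MvPolynomial (Fin N) ℂ)
    (s : Finset (Fin N →₀ ℕ)) : ∑ α ∈ s, fischerTerm p α ≤ fischerNormSq p := by
  classical
  calc _ ≤ ∑ α ∈ s ∪ p.support, fischerTerm p α :=
        Finset.sum_le_sum_of_subset_of_nonneg Finset.subset_union_left
          fun α _ _ => fischerTerm_nonneg p α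
    _ = fischerNormSq p := by
        refine (Finset.sum_subset Finset.subset_union_right fun α _ hα => ?_).symm
        simp [fischerTerm, notMem_support_iff.mp hα]

theorem fischerNormSq_le_mul_of_fischerTerm_le_shift {p q : MvPolynomial (Fin N) ℂ}
    (Γ : Fin N →₀ ℕ) {C : ℝ} (hC : 0 ≤ C) (h : ∀ β, fischerTerm q β ≤ C * fischerTerm p (β + Γ)) :
    fischerNormSq q ≤ C * fischerNormSq p :=
  calc fischerNormSq q ≤ ∑ β ∈ q.support, C * fischerTerm p (β + Γ) :=
        Finset.sum_le_sum fun β _ => h β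
    _ = C * ∑ α ∈ q.support.map (addRightEmbedding Γ), fischerTerm p α := by
        rw [Finset.mul_sum, Finset.sum_map]
        rfl
    _ ≤ C * fischerNormSq p :=
        mul_le_mul_of_nonneg_left (sum_fischerTerm_le_fischerNormSq p _) hC

theorem fischerTerm_mderiv_le {m : ℕ} {p : MvPolynomial (Fin N) ℂ} (hp : p.totalDegree ≤ m)
    (γ : Fin N → ℕ) (β : Fin N →₀ ℕ) :
    fischerTerm (mderiv γ p) β ≤
      (m : ℝ) ^ (∑ j, γ j) * fischerTerm p (β + Finsupp.equivFunOnFinite.symm γ) := by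
  unfold fischerTerm
  rw [coeff_mderiv, norm_mul, mul_pow, Complex.norm_natCast]
  set α := β + Finsupp.equivFunOnFinite.symm γ with hα
  have hαj : ∀ j, α j = β j + γ j := fun j => by simp [hα]
  by_cases hc : coeff α p = 0
  · simp [hc]
  set D := ∏ j, (β j + γ j).descFactorial (γ j)
  have hdeg : ∑ j, (β j + γ j) ≤ m := by
    simpa [hαj, Finsupp.sum_fintype] using (le_totalDegree (mem_support_iff.mpr hc)).trans hp
  have hD : (D : ℝ) ≤ (m : ℝ) ^ ∑ j, γ j := by
    exact_mod_cast Finset.prod_descFactorial_le_pow_sum _ β γ hdeg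
  have hfact : (∏ j, ((β j).factorial : ℝ)) * D = ∏ j, ((α j).factorial : ℝ) := by
    simp only [hαj]
    exact_mod_cast Finset.prod_factorial_mul_prod_descFactorial _ β γ
  calc (∏ j, ((β j).factorial : ℝ)) * (‖coeff α p‖ ^ 2 * (D : ℝ) ^ 2)
      = D * ((∏ j, ((α j).factorial : ℝ)) * ‖coeff α p‖ ^ 2) := by
        rw [← hfact]
        ring
    _ ≤ (m : ℝ) ^ (∑ j, γ j) * ((∏ j, ((α j).factorial : ℝ)) * ‖coeff α p‖ ^ 2) := by
        gcongr

theorem fischerNormSq_mderiv_le {m : ℕ} {p : MvPolynomial (Fin N) ℂ} (hp : p.totalDegree ≤ m)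
    (γ : Fin N → ℕ) :
    fischerNormSq (mderiv γ p) ≤ (m : ℝ) ^ (∑ j, γ j) * fischerNormSq p :=
  fischerNormSq_le_mul_of_fischerTerm_le_shift _ (by positivity) (fischerTerm_mderiv_le hp γ)

end Fischer

theorem stmt9 (N : ℕ) (m : ℕ) (p : MvPolynomial (Fin N) ℂ)
    (hhom : p.IsHomogeneous m) (γ : Fin N → ℕ) :
    Real.sqrt (fischerNormSq (mderiv γ p)) ≤
      (m : ℝ) ^ (∑ j, γ j) * Real.sqrt (fischerNormSq p) := by
  set M : ℝ := (m : ℝ) ^ ∑ j, γ j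
  have hM : M ≤ M ^ 2 := by
    simp only [M]
    exact_mod_cast Nat.le_self_pow two_ne_zero (m ^ ∑ j, γ j)
  calc Real.sqrt (fischerNormSq (mderiv γ p))
      ≤ Real.sqrt (M ^ 2 * fischerNormSq p) := by
        refine Real.sqrt_le_sqrt ((fischerNormSq_mderiv_le hhom.totalDegree_le γ).trans ?_)
        exact mul_le_mul_of_nonneg_right hM (fischerNormSq_nonneg p)
    _ = M * Real.sqrt (fischerNormSq p) := by
        rw [Real.sqrt_mul (by positivity), Real.sqrt_sq (by positivity)]
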